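/- arXiv:2007.00895 — 2 statements merged into one kernel-verified Lean document; each statement's English description precedes it below -/
import Mathlib

section
/- For any probability density function p on the real line with finite variance V and finite supremum M = sup p, it holds that M ≥ 1/(2√3·√V). Equivalently, the distribution minimizing the variance subject to a given maximum density value M is the uniform (rectangle) distribution on an interval of length 1/M, whose variance is 1/(12M²). -/
open MeasureTheory

/-- For any probability density function `p` on the real line with mean `μ`, finite
variance `V`, and supremum bound `M`, it holds that `M ≥ 1/(2·√3·√V)`. -/
theorem density_sup_ge_inv_sqrt_variance
    (p : ℝ → ℝ) (μ V M : ℝ)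
    (hmeas : Measurable p)
    (hpos : ∀ x, 0 ≤ p x)
    (hint : Integrable p)
    (hnorm : ∫ x, p x = 1)
    (hmean_int : Integrable fun x => x * p x)
    (hmean : ∫ x, x * p x = μ)
    (hvar_int : Integrable fun x => (x - μ) ^ 2 * p x)
    (hvar : ∫ x, (x - μ) ^ 2 * p x = V)
    (hM : ∀ x, p x ≤ M) :
    1 / (2 * Real.sqrt 3 * Real.sqrt V) ≤ M := by
  -- M is positive
  have hM0 : 0 < M := by
    by_contra h
    push_neg at h
    have hp0 : ∀ x, p x = 0 := fun x => le_antisymm ((hM x).trans h) (hpos x)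
    simp [hp0] at hnorm
  set c : ℝ := 1 / (2 * M) with hc
  have hc0 : 0 < c := by positivity
  set s : Set ℝ := Set.Icc (μ - c) (μ + c) with hs
  set q : ℝ → ℝ := s.indicator (fun _ => M) with hq
  have hsmeas : MeasurableSet s := measurableSet_Icc
  have hvols : MeasureTheory.volume s = ENNReal.ofReal (2 * c) := by
    rw [hs, Real.volume_Icc]
    ring_nf
  have hq_int : Integrable q := by
    rw [hq, integrable_indicator_iff hsmeas]
    exact integrableOn_const (by rw [hvols]; exact ENNReal.ofReal_ne_top)
  -- ∫ q = 1
  have hq_norm : ∫ x, q x = 1 := by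
    rw [hq, integral_indicator hsmeas, setIntegral_const, measureReal_def, hvols, smul_eq_mul,
      ENNReal.toReal_ofReal (by positivity)]
    rw [hc]
    field_simp
  -- second moment of q
  have h1 : (fun x => (x - μ) ^ 2 * q x) = s.indicator (fun x => (x - μ) ^ 2 * M) := by
    funext x
    simp only [hq, Set.indicator_apply]
    split_ifs <;> ring
  have hq2_int : Integrable (fun x => (x - μ) ^ 2 * q x) := by
    rw [h1, integrable_indicator_iff hsmeas]
    exact (Continuous.integrableOn_Icc (by continuity))
  have hq_var : ∫ x, (x - μ) ^ 2 * q x = 1 / (12 * M ^ 2) := by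
    rw [h1, integral_indicator hsmeas, hs, integral_Icc_eq_integral_Ioc,
      ← intervalIntegral.integral_of_le (by linarith)]
    have h2 : ∫ x in (μ - c)..(μ + c), (x - μ) ^ 2 * M
        = (∫ x in (μ - c)..(μ + c), (x - μ) ^ 2) * M := by
      rw [← intervalIntegral.integral_mul_const]
    rw [h2, intervalIntegral.integral_comp_sub_right (fun x => x ^ 2) μ]
    have h3 : μ + c - μ = c := by ring
    have h4 : μ - c - μ = -c := by ring
    rw [h3, h4, integral_pow]
    have hMne : M ≠ 0 := ne_of_gt hM0
    rw [hc]
    field_simp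
    ring_nf
    rw [← mul_pow, mul_inv_cancel₀ hMne]
    ring
  -- pointwise comparison
  have key : ∀ x, (x - μ) ^ 2 * q x + c ^ 2 * (p x - q x) ≤ (x - μ) ^ 2 * p x := by
    intro x
    by_cases hx : x ∈ s
    · have hqx : q x = M := by rw [hq]; exact Set.indicator_of_mem hx _
      have h1 : (x - μ) ^ 2 ≤ c ^ 2 := by
        rw [hs, Set.mem_Icc] at hx
        nlinarith [hx.1, hx.2]
      have h2 : p x ≤ M := hM x
      rw [hqx]
      nlinarith
    · have hqx : q x = 0 := by rw [hq]; exact Set.indicator_of_notMem hx _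
      have h1 : c ^ 2 ≤ (x - μ) ^ 2 := by
        rw [hs, Set.mem_Icc] at hx
        push_neg at hx
        rcases le_or_gt (μ - c) x with h | h
        · nlinarith [hx h]
        · nlinarith
      have := hpos x
      rw [hqx]
      nlinarith
  -- integrate the comparison
  have hlhs_int : Integrable (fun x => (x - μ) ^ 2 * q x + c ^ 2 * (p x - q x)) :=
    hq2_int.add ((hint.sub hq_int).const_mul _)
  have hineq : 1 / (12 * M ^ 2) ≤ V := by
    have h5 := integral_mono hlhs_int hvar_int key
    have hsplit : ∫ x, ((x - μ) ^ 2 * q x + c ^ 2 * (p x - q x))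
        = (∫ x, (x - μ) ^ 2 * q x) + c ^ 2 * ((∫ x, p x) - ∫ x, q x) := by
      have hsub : Integrable (fun x => p x - q x) := hint.sub hq_int
      have e1 : ∫ x, ((x - μ) ^ 2 * q x + c ^ 2 * (p x - q x))
          = (∫ x, (x - μ) ^ 2 * q x) + ∫ x, c ^ 2 * (p x - q x) :=
        integral_add hq2_int (hsub.const_mul (c ^ 2))
      have e2 : ∫ x, c ^ 2 * (p x - q x) = c ^ 2 * ∫ x, (p x - q x) :=
        integral_const_mul _ _
      have e3 : ∫ x, (p x - q x) = (∫ x, p x) - ∫ x, q x := integral_sub hint hq_int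
      rw [e1, e2, e3]
    rw [hvar, hsplit, hnorm, hq_norm, hq_var] at h5
    linarith
  -- conclude
  have hV0 : 0 < V := lt_of_lt_of_le (by positivity) hineq
  have hs3 : (0:ℝ) < Real.sqrt 3 := Real.sqrt_pos.2 (by norm_num)
  have hsV : (0:ℝ) < Real.sqrt V := Real.sqrt_pos.2 hV0
  have h3sq : Real.sqrt 3 ^ 2 = 3 := Real.sq_sqrt (by norm_num)
  have hVsq : Real.sqrt V ^ 2 = V := Real.sq_sqrt hV0.le
  have h12 : 1 ≤ 12 * M ^ 2 * V := by
    have := (div_le_iff₀ (by positivity : (0:ℝ) < 12 * M ^ 2)).1 hineq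
    linarith
  have ha2 : (M * (2 * Real.sqrt 3 * Real.sqrt V)) ^ 2 = 12 * M ^ 2 * V := by
    rw [mul_pow, mul_pow, mul_pow, h3sq, hVsq]; ring
  rw [div_le_iff₀ (by positivity)]
  nlinarith [sq_nonneg (M * (2 * Real.sqrt 3 * Real.sqrt V) - 1),
    mul_pos (mul_pos hM0 hs3) hsV]
end

section
/- For a projective measurement on subsystem A: if Π is a projection on system A, Ψ is a bipartite quantum state on A⊗B with tr[(Π⊗I)Ψ] > 0, and the post-measurement state is Ψ' = (Π⊗I)Ψ(Π⊗I)/tr[(Π⊗I)Ψ], then the conditional min-entropy satisfies H_min(A|B)_{Ψ'} ≥ H_min(A|B)_Ψ + log₂ tr[(Π⊗I)Ψ]. -/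
open scoped Matrix Kronecker ComplexOrder
open Matrix MeasureTheory

noncomputable section

def traceNorm {n : Type*} [Fintype n] [DecidableEq n] (A : Matrix n n ℂ) : ℝ :=
  (((Matrix.posSemidef_conjTranspose_mul_self A).1.eigenvectorUnitary.1 *
    Matrix.diagonal (((↑) : ℝ → ℂ) ∘ (Real.sqrt ∘ (Matrix.posSemidef_conjTranspose_mul_self A).1.eigenvalues)) *
    (star (Matrix.posSemidef_conjTranspose_mul_self A).1.eigenvectorUnitary : Matrix n n ℂ)).trace).re

def IsDensity {n : Type*} [Fintype n] (ρ : Matrix n n ℂ) : Prop :=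
  ρ.PosSemidef ∧ ρ.trace = 1

def ptraceB {a b : Type*} [Fintype b] (M : Matrix (a × b) (a × b) ℂ) : Matrix a a ℂ :=
  Matrix.of fun i j => ∑ x : b, M (i, x) (j, x)

def ptraceA {a b : Type*} [Fintype a] (M : Matrix (a × b) (a × b) ℂ) : Matrix b b ℂ :=
  Matrix.of fun i j => ∑ x : a, M (x, i) (x, j)

def condMinEntropy {x c : Type*} [Fintype x] [DecidableEq x] [Fintype c] [DecidableEq c]
    (ρ : Matrix (x × c) (x × c) ℂ) : ℝ :=
  sSup {l : ℝ | ∃ σ : Matrix c c ℂ, IsDensity σ ∧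
    ((((2:ℝ) ^ (-l) : ℝ) : ℂ) • ((1 : Matrix x x ℂ) ⊗ₖ σ) - ρ).PosSemidef}

def outer {n : Type*} (v : n → ℂ) : Matrix n n ℂ :=
  Matrix.of fun i j => v i * star (v j)

/- ### Auxiliary lemmas -/

lemma psd_smul {n : Type*} [Fintype n] {c : ℝ} (hc : 0 ≤ c) {M : Matrix n n ℂ}
    (hM : M.PosSemidef) : (((c:ℝ):ℂ) • M).PosSemidef := by
  refine posSemidef_iff_dotProduct_mulVec.mpr ⟨?_, ?_⟩
  · unfold Matrix.IsHermitian
    rw [conjTranspose_smul, hM.1.eq]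
    simp
  · intro x
    rw [smul_mulVec, dotProduct_smul]
    exact mul_nonneg (by exact_mod_cast Complex.zero_le_real.mpr hc) (hM.dotProduct_mulVec_nonneg x)

lemma kron_conjTranspose {m n : Type*} (A : Matrix m m ℂ) (B : Matrix n n ℂ) :
    (A ⊗ₖ B)ᴴ = Aᴴ ⊗ₖ Bᴴ := by
  ext ⟨i, j⟩ ⟨k, l⟩
  simp [Matrix.conjTranspose_apply, Matrix.kroneckerMap_apply, mul_comm]

lemma psd_kron {m n : Type*} [Fintype m] [Fintype n] [DecidableEq m] [DecidableEq n]
    {A : Matrix m m ℂ} {B : Matrix n n ℂ} (hA : A.PosSemidef) (hB : B.PosSemidef) :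
    (A ⊗ₖ B).PosSemidef := by
  exact hA.kronecker hB

lemma psd_trace_nonneg {n : Type*} [Fintype n] [DecidableEq n] {M : Matrix n n ℂ}
    (hM : M.PosSemidef) : 0 ≤ M.trace := by
  refine Finset.sum_nonneg fun i _ => ?_
  have := hM.dotProduct_mulVec_nonneg (Pi.single i 1)
  simpa [dotProduct, Pi.single_apply, Finset.sum_ite_eq] using this

lemma one_sub_density_psd {n : Type*} [Fintype n] [DecidableEq n] {A : Matrix n n ℂ}
    (h : IsDensity A) : ((1 : Matrix n n ℂ) - A).PosSemidef := by
  obtain ⟨hpsd, htr⟩ := h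
  have hH := hpsd.1
  set U : Matrix n n ℂ := (hH.eigenvectorUnitary : Matrix n n ℂ) with hU
  have hUU : U * star U = 1 := Matrix.mem_unitaryGroup_iff.mp hH.eigenvectorUnitary.2
  have hsum : ∑ i, hH.eigenvalues i = 1 := by
    have : A.trace = ∑ i, (hH.eigenvalues i : ℂ) := by
      conv_lhs => rw [hH.spectral_theorem, Unitary.conjStarAlgAut_apply]
      rw [Matrix.trace_mul_comm, ← Matrix.mul_assoc]
      rw [Matrix.mem_unitaryGroup_iff'.mp hH.eigenvectorUnitary.2]
      simp [Matrix.trace_diagonal]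
    rw [htr] at this
    exact_mod_cast this.symm
  have hle : ∀ i, hH.eigenvalues i ≤ 1 := by
    intro i
    rw [← hsum]
    exact Finset.single_le_sum (f := hH.eigenvalues)
      (fun j _ => hpsd.eigenvalues_nonneg j) (Finset.mem_univ i)
  have key : (1 : Matrix n n ℂ) - A
      = U * Matrix.diagonal (fun i => ((1 - hH.eigenvalues i : ℝ) : ℂ)) * Uᴴ := by
    have h1 : (1 : Matrix n n ℂ) = U * 1 * Uᴴ := by
      rw [Matrix.mul_one]; exact hUU.symm
    conv_lhs => rw [h1, hH.spectral_theorem, Unitary.conjStarAlgAut_apply]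
    rw [← hU]
    rw [show star U = Uᴴ from rfl]
    rw [← Matrix.sub_mul, ← Matrix.mul_sub]
    congr 1
    congr 1
    rw [← Matrix.diagonal_one, Matrix.diagonal_sub]
    simp [Function.comp]
  rw [key]
  exact (Matrix.posSemidef_diagonal_iff.mpr fun i => by
    rw [Complex.zero_le_real]; linarith [hle i]).mul_mul_conjTranspose_same U

/-- Conditional min-entropy after a projective measurement on `A`:
`H_min(A|B)_{Ψ'} ≥ H_min(A|B)_Ψ + log₂ tr[(Π⊗I)Ψ]`. -/
theorem condMinEntropy_projective_measurement
    {a b : Type*} [Fintype a] [DecidableEq a] [Fintype b] [DecidableEq b]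
    (P : Matrix a a ℂ) (hP : P.IsHermitian) (hP2 : P * P = P)
    (Ψ : Matrix (a × b) (a × b) ℂ) (hΨ : IsDensity Ψ)
    (t : ℝ) (ht : (t : ℂ) = ((P ⊗ₖ (1 : Matrix b b ℂ)) * Ψ).trace) (htpos : 0 < t)
    (Ψ' : Matrix (a × b) (a × b) ℂ)
    (hΨ' : Ψ' = ((t : ℂ))⁻¹ • ((P ⊗ₖ (1 : Matrix b b ℂ)) * Ψ * (P ⊗ₖ (1 : Matrix b b ℂ)))) :
    condMinEntropy Ψ + Real.logb 2 t ≤ condMinEntropy Ψ' := by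
  classical
  have hab : Nonempty (a × b) := by
    by_contra h
    rw [not_nonempty_iff] at h
    have h1 := hΨ.2
    rw [Matrix.trace] at h1
    simp [Finset.univ_eq_empty] at h1
  haveI := hab
  haveI : Nonempty a := ⟨hab.some.1⟩
  haveI : Nonempty b := ⟨hab.some.2⟩
  set Q : Matrix (a × b) (a × b) ℂ := P ⊗ₖ (1 : Matrix b b ℂ) with hQ
  have hQH : Qᴴ = Q := by
    rw [hQ, kron_conjTranspose, hP.eq, Matrix.conjTranspose_one]
  have hQ2 : Q * Q = Q := by
    rw [hQ, ← Matrix.mul_kronecker_mul, hP2, Matrix.one_mul]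
  have htne : (t : ℂ) ≠ 0 := by
    exact_mod_cast (Complex.ofReal_ne_zero.mpr htpos.ne')
  have htinv_nonneg : (0:ℝ) ≤ t⁻¹ := (inv_pos.mpr htpos).le
  have htrΨ' : Ψ'.trace = 1 := by
    rw [hΨ', Matrix.trace_smul, Matrix.trace_mul_comm, ← Matrix.mul_assoc, hQ2, ← ht,
      smul_eq_mul, inv_mul_cancel₀ htne]
  -- the complement projection is PSD
  have h1P : ((1 : Matrix a a ℂ) - P).PosSemidef := by
    have hh : ((1 : Matrix a a ℂ) - P)ᴴ = 1 - P := by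
      rw [Matrix.conjTranspose_sub, Matrix.conjTranspose_one, hP.eq]
    have hsq : ((1 : Matrix a a ℂ) - P) = ((1 : Matrix a a ℂ) - P)ᴴ * ((1 : Matrix a a ℂ) - P) := by
      rw [hh, Matrix.sub_mul, Matrix.one_mul, Matrix.mul_sub, Matrix.mul_one, hP2]
      abel
    rw [hsq]
    exact Matrix.posSemidef_conjTranspose_mul_self _
  set S : Set ℝ := {l : ℝ | ∃ σ : Matrix b b ℂ, IsDensity σ ∧
    ((((2:ℝ) ^ (-l) : ℝ) : ℂ) • ((1 : Matrix a a ℂ) ⊗ₖ σ) - Ψ).PosSemidef} with hS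
  set S' : Set ℝ := {l : ℝ | ∃ σ : Matrix b b ℂ, IsDensity σ ∧
    ((((2:ℝ) ^ (-l) : ℝ) : ℂ) • ((1 : Matrix a a ℂ) ⊗ₖ σ) - Ψ').PosSemidef} with hS'
  -- S is nonempty
  have hSne : S.Nonempty := by
    refine ⟨-(Real.logb 2 (Fintype.card b)),
      (((((Fintype.card b : ℝ))⁻¹ : ℝ) : ℂ) • (1 : Matrix b b ℂ)), ⟨?_, ?_⟩, ?_⟩
    · exact psd_smul (c := ((Fintype.card b : ℝ))⁻¹) (by positivity)
        (Matrix.PosSemidef.one (n := b) (R := ℂ))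
    · rw [Matrix.trace_smul, Matrix.trace_one, smul_eq_mul]
      have : (Fintype.card b : ℝ) ≠ 0 := Nat.cast_ne_zero.mpr Fintype.card_ne_zero
      push_cast
      field_simp
    · have h2 : ((2:ℝ) ^ (-(-(Real.logb 2 (Fintype.card b)))) : ℝ) = (Fintype.card b : ℝ) := by
        rw [neg_neg]
        exact Real.rpow_logb (by norm_num) (by norm_num)
          (by exact_mod_cast Fintype.card_pos)
      have heq : (((2:ℝ) ^ (-(-(Real.logb 2 (Fintype.card b)))) : ℝ) : ℂ) •
          ((1 : Matrix a a ℂ) ⊗ₖ (((((Fintype.card b : ℝ))⁻¹ : ℝ) : ℂ) • (1 : Matrix b b ℂ)))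
          = (1 : Matrix (a × b) (a × b) ℂ) := by
        rw [h2, Matrix.kronecker_smul, Matrix.one_kronecker_one, smul_smul]
        rw [show ((Fintype.card b : ℝ) : ℂ) * ((((Fintype.card b : ℝ))⁻¹ : ℝ) : ℂ) = 1 by
          push_cast
          field_simp]
        rw [one_smul]
      rw [heq]
      exact one_sub_density_psd hΨ
  -- S' is bounded above
  have hbdd : BddAbove S' := by
    refine ⟨Real.logb 2 (Fintype.card a), ?_⟩
    rintro l ⟨σ, hσ, hpsd⟩
    have h0 := psd_trace_nonneg hpsd
    rw [Matrix.trace_sub, Matrix.trace_smul, Matrix.trace_kronecker, Matrix.trace_one,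
      hσ.2, htrΨ'] at h0
    have h0' : (0:ℝ) ≤ (2:ℝ) ^ (-l) * (Fintype.card a : ℝ) - 1 := by
      rw [show ((((2:ℝ) ^ (-l) : ℝ) : ℂ) • ((Fintype.card a : ℂ) * 1) - 1)
          = ((((2:ℝ) ^ (-l) * (Fintype.card a : ℝ) - 1 : ℝ)) : ℂ) by
        rw [smul_eq_mul]; push_cast; ring] at h0
      exact Complex.zero_le_real.mp h0
    have hnpos : (0:ℝ) < (Fintype.card a : ℝ) := by exact_mod_cast Fintype.card_pos
    have h1 : ((Fintype.card a : ℝ))⁻¹ ≤ (2:ℝ) ^ (-l) := by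
      rw [inv_le_iff_one_le_mul₀ hnpos]
      linarith
    have h2 := Real.logb_le_logb_of_le (b := 2) (by norm_num)
      (by positivity) h1
    rw [Real.logb_inv, Real.logb_rpow (by norm_num) (by norm_num)] at h2
    linarith
  -- each achievable rate for Ψ gives one for Ψ'
  have hmem : ∀ l ∈ S, (l + Real.logb 2 t) ∈ S' := by
    rintro l ⟨σ, hσ, hpsd⟩
    refine ⟨σ, hσ, ?_⟩
    have hrpow : ((2:ℝ) ^ (-(l + Real.logb 2 t)) : ℝ) = (2:ℝ) ^ (-l) * t⁻¹ := by
      rw [neg_add, Real.rpow_add (by norm_num)]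
      congr 1
      rw [Real.rpow_neg (by norm_num), Real.rpow_logb (by norm_num) (by norm_num) htpos]
    have key : ((((2:ℝ) ^ (-(l + Real.logb 2 t)) : ℝ) : ℂ) •
          ((1 : Matrix a a ℂ) ⊗ₖ σ) - Ψ')
        = (((t⁻¹ : ℝ)) : ℂ) •
          (Qᴴ * ((((2:ℝ) ^ (-l) : ℝ) : ℂ) • ((1 : Matrix a a ℂ) ⊗ₖ σ) - Ψ) * Q
            + (((2:ℝ) ^ (-l) : ℝ) : ℂ) • (((1 : Matrix a a ℂ) - P) ⊗ₖ σ)) := by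
      have e1 : Q * ((1 : Matrix a a ℂ) ⊗ₖ σ) * Q = P ⊗ₖ σ := by
        rw [hQ, ← Matrix.mul_kronecker_mul, ← Matrix.mul_kronecker_mul, Matrix.mul_one,
          Matrix.one_mul, hP2, Matrix.mul_one]
      have e2 : ((1 : Matrix a a ℂ) - P) ⊗ₖ σ
          = (1 : Matrix a a ℂ) ⊗ₖ σ - P ⊗ₖ σ := by
        ext ⟨i, j⟩ ⟨k, m⟩
        simp [Matrix.kroneckerMap_apply, sub_mul]
      rw [hQH, Matrix.mul_sub, Matrix.sub_mul, Matrix.mul_smul, Matrix.smul_mul, e1, e2,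
        hΨ', hrpow]
      push_cast
      module
    rw [key]
    refine psd_smul htinv_nonneg (Matrix.PosSemidef.add ?_ ?_)
    · exact hpsd.conjTranspose_mul_mul_same Q
    · exact psd_smul (by positivity) (psd_kron h1P hσ.1)
  have hfin : sSup S ≤ sSup S' - Real.logb 2 t := by
    apply csSup_le hSne
    intro l hl
    have := le_csSup hbdd (hmem l hl)
    linarith
  have : condMinEntropy Ψ = sSup S := rfl
  rw [this]
  have : condMinEntropy Ψ' = sSup S' := rfl
  rw [this]
  linarith
end
end
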